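/- Let m > k > 0 be integers. Then there exists a real number a ∈ (−k/m, 0) such that S(a,a) = 0. -/
import Mathlib

noncomputable def Spoly (m k : ℕ) (a ξ : ℝ) : ℝ :=
  ∑ j ∈ Finset.range (m + 1),
    ((-1 : ℝ) ^ j * ξ ^ (2 * j) / (2 * (j : ℝ) - 1)) *
      ((Nat.choose (m - 1) j : ℝ) * ((m : ℝ) * a + (k : ℝ)) * a
        + (if j = 0 then 0 else (Nat.choose (m - 1) (j - 1) : ℝ))
            * ((k : ℝ) * a + (m : ℝ)))

open Finset Polynomial

lemma choose_le_two_pow' (n k : ℕ) : n.choose k ≤ 2 ^ n := by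
  rcases le_or_gt k n with h | h
  · calc n.choose k ≤ ∑ i ∈ range (n + 1), n.choose i :=
        Finset.single_le_sum (fun i _ => Nat.zero_le _) (Finset.mem_range.mpr (by omega))
      _ = 2 ^ n := Nat.sum_range_choose n
  · rw [Nat.choose_eq_zero_of_lt h]; positivity

/-- The "antiderivative of (1-x^2)^(m-1)" sum is negative for x ∈ (-1,0). -/
lemma gsum_neg (m : ℕ) (hm : 1 ≤ m) {x : ℝ} (hx1 : -1 < x) (hx0 : x < 0) :
    ∑ i ∈ range m, ((m - 1).choose i : ℝ) * (-1) ^ i * x ^ (2 * i + 1) / (2 * i + 1) < 0 := by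
  set G : Polynomial ℝ :=
    ∑ i ∈ range m, C (((m - 1).choose i : ℝ) * (-1) ^ i / (2 * i + 1)) * X ^ (2 * i + 1) with hG
  have hEval : ∀ y : ℝ, G.eval y =
      ∑ i ∈ range m, ((m - 1).choose i : ℝ) * (-1) ^ i * y ^ (2 * i + 1) / (2 * i + 1) := by
    intro y
    rw [hG, Polynomial.eval_finset_sum]
    refine Finset.sum_congr rfl fun i _ => ?_
    rw [eval_mul, eval_pow, eval_C, eval_X]
    ring
  have hDeriv : derivative G = (1 - X ^ 2) ^ (m - 1) := by
    rw [hG, map_sum]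
    have h3 : (1 - X ^ 2 : Polynomial ℝ) ^ (m - 1) = ((-X ^ 2) + 1) ^ (m - 1) := by ring
    rw [h3, add_pow]
    have hrange : (m - 1) + 1 = m := by omega
    rw [hrange]
    refine Finset.sum_congr rfl fun i _ => ?_
    rw [Polynomial.derivative_C_mul_X_pow]
    have h1 : ((m - 1).choose i : ℝ) * (-1) ^ i / (2 * i + 1) * ((2 * i + 1 : ℕ) : ℝ)
        = ((m - 1).choose i : ℝ) * (-1) ^ i := by
      have : ((2 * i + 1 : ℕ) : ℝ) = 2 * i + 1 := by push_cast; ring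
      rw [this]
      have h2 : (2 * (i : ℝ) + 1) ≠ 0 := by positivity
      field_simp
    rw [h1]
    have h2 : 2 * i + 1 - 1 = 2 * i := rfl
    rw [h2, map_mul, map_pow, map_neg, map_one, map_natCast]
    ring
  have hmono : StrictMonoOn (fun y => G.eval y) (Set.Icc (-1 : ℝ) 0) := by
    apply strictMonoOn_of_deriv_pos (convex_Icc _ _)
    · exact (Polynomial.continuous G).continuousOn
    · intro y hy
      rw [interior_Icc] at hy
      rw [Polynomial.deriv, hDeriv]
      simp only [eval_pow, eval_sub, eval_one, eval_X]
      apply pow_pos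
      nlinarith [hy.1, hy.2]
  have h0 : G.eval 0 = 0 := by
    rw [hEval]
    simp
  have hx : G.eval x < G.eval 0 :=
    hmono (Set.mem_Icc.mpr ⟨hx1.le, hx0.le⟩) (Set.mem_Icc.mpr ⟨by norm_num, le_refl 0⟩) hx0
  rw [h0, hEval] at hx
  exact hx

set_option maxHeartbeats 1000000 in
/-- there exists a ∈ (−k/m, 0) with S(a,a) = 0. -/
theorem stmt_15 (m k : ℕ) (hk : 0 < k) (hkm : k < m) :
    ∃ a : ℝ, -(k : ℝ) / (m : ℝ) < a ∧ a < 0 ∧ Spoly m k a a = 0 := by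
  have hm1 : 1 ≤ m := by omega
  have hm0 : (0 : ℝ) < m := by exact_mod_cast (by omega : 0 < m)
  have hk0 : (0 : ℝ) < k := by exact_mod_cast hk
  have hkmR : (k : ℝ) < m := by exact_mod_cast hkm
  set L : ℝ := -(k : ℝ) / m with hL
  have hL1 : -1 < L := by
    rw [hL, neg_div, neg_lt, neg_neg, div_lt_one hm0]
    exact hkmR
  have hL0 : L < 0 := by
    rw [hL, neg_div]
    simp only [neg_neg, Left.neg_neg_iff]
    positivity
  -- f(L) < 0
  have hfL : Spoly m k L L < 0 := by
    have hma : (m : ℝ) * L + k = 0 := by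
      rw [hL]; field_simp; ring
    have hka : (0 : ℝ) < (k : ℝ) * L + m := by
      nlinarith [mul_lt_mul_of_pos_left hL1 hk0]
    simp only [Spoly]
    rw [Finset.sum_range_succ']
    have h0term : ((-1 : ℝ) ^ 0 * L ^ (2 * 0) / (2 * ((0:ℕ) : ℝ) - 1)) *
        ((Nat.choose (m - 1) 0 : ℝ) * ((m : ℝ) * L + k) * L
          + (if (0:ℕ) = 0 then 0 else (Nat.choose (m - 1) (0 - 1) : ℝ)) * ((k : ℝ) * L + m)) = 0 := by
      rw [hma]; simp
    rw [h0term, add_zero]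
    have hsum : ∀ i ∈ range m, ((-1 : ℝ) ^ (i+1) * L ^ (2 * (i+1)) / (2 * ((i+1 : ℕ) : ℝ) - 1)) *
        ((Nat.choose (m - 1) (i+1) : ℝ) * ((m : ℝ) * L + k) * L
          + (if (i+1) = 0 then 0 else (Nat.choose (m - 1) (i+1-1) : ℝ)) * ((k : ℝ) * L + m))
        = (((k : ℝ) * L + m) * (-L)) *
          (((m - 1).choose i : ℝ) * (-1) ^ i * L ^ (2 * i + 1) / (2 * i + 1)) := by
      intro i _
      rw [hma]
      simp only [Nat.add_sub_cancel, if_neg (Nat.succ_ne_zero i), mul_zero, zero_mul, zero_add]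
      push_cast
      ring
    rw [Finset.sum_congr rfl hsum, ← Finset.mul_sum]
    exact mul_neg_of_pos_of_neg (mul_pos hka (by linarith)) (gsum_neg m hm1 hL1 hL0)
  -- choose a0 near 0 with f(a0) > 0
  obtain ⟨B, hB, hBpos⟩ : ∃ B : ℝ, B = 2 * 2 ^ m * ((m : ℝ) + k) ∧ 0 < B :=
    ⟨_, rfl, by positivity⟩
  obtain ⟨M, hM, hMpos⟩ : ∃ M : ℝ, M = (m : ℝ) + m * B ∧ 0 < M :=
    ⟨_, rfl, by rw [hB]; positivity⟩
  obtain ⟨a0, ha0⟩ : ∃ a0 : ℝ, a0 = -min ((k : ℝ) / (2 * m)) (min 1 ((k : ℝ) / (2 * M))) :=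
    ⟨_, rfl⟩
  have ha0neg : a0 < 0 := by
    rw [ha0, Left.neg_neg_iff]
    exact lt_min (by positivity) (lt_min one_pos (by positivity))
  have ha0ge : -a0 ≤ (k : ℝ) / (2 * m) := by rw [ha0, neg_neg]; exact min_le_left _ _
  have ha0le1 : -a0 ≤ 1 := by
    rw [ha0, neg_neg]; exact le_trans (min_le_right _ _) (min_le_left _ _)
  have ha0leM : -a0 ≤ (k : ℝ) / (2 * M) := by
    rw [ha0, neg_neg]; exact le_trans (min_le_right _ _) (min_le_right _ _)
  have hLa0 : L < a0 := by
    have h1 : -a0 < (k : ℝ) / m := by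
      refine lt_of_le_of_lt ha0ge ?_
      rw [div_lt_div_iff₀ (by positivity) hm0]
      nlinarith
    rw [hL, neg_div]
    linarith [neg_lt_neg h1]
  have hfa0 : 0 < Spoly m k a0 a0 := by
    have habs : |a0| ≤ 1 := by rw [abs_of_neg ha0neg]; exact ha0le1
    simp only [Spoly]
    rw [Finset.sum_range_succ']
    have h0term : ((-1 : ℝ) ^ 0 * a0 ^ (2 * 0) / (2 * ((0:ℕ) : ℝ) - 1)) *
        ((Nat.choose (m - 1) 0 : ℝ) * ((m : ℝ) * a0 + k) * a0
          + (if (0:ℕ) = 0 then 0 else (Nat.choose (m - 1) (0 - 1) : ℝ)) * ((k : ℝ) * a0 + m))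
        = -(((m : ℝ) * a0 + k) * a0) := by
      norm_num
    rw [h0term]
    have hbound : ∀ i ∈ range m,
        |((-1 : ℝ) ^ (i+1) * a0 ^ (2 * (i+1)) / (2 * ((i+1 : ℕ) : ℝ) - 1)) *
        ((Nat.choose (m - 1) (i+1) : ℝ) * ((m : ℝ) * a0 + k) * a0
          + (if (i+1) = 0 then 0 else (Nat.choose (m - 1) (i+1-1) : ℝ)) * ((k : ℝ) * a0 + m))|
        ≤ a0 ^ 2 * B := by
      intro i _
      rw [abs_mul]
      have hd : (1 : ℝ) ≤ 2 * ((i+1 : ℕ) : ℝ) - 1 := by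
        push_cast; linarith [Nat.cast_nonneg (α := ℝ) i]
      have h1 : |(-1 : ℝ) ^ (i+1) * a0 ^ (2 * (i+1)) / (2 * ((i+1 : ℕ) : ℝ) - 1)| ≤ a0 ^ 2 := by
        rw [abs_div, abs_mul, abs_pow, abs_neg, abs_one, one_pow, one_mul, abs_pow,
          abs_of_pos (by linarith : (0:ℝ) < 2 * ((i+1 : ℕ) : ℝ) - 1)]
        calc |a0| ^ (2 * (i+1)) / (2 * ((i+1 : ℕ) : ℝ) - 1) ≤ |a0| ^ (2 * (i+1)) / 1 :=
              div_le_div_of_nonneg_left (by positivity) one_pos hd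
          _ = |a0| ^ (2 * (i+1)) := div_one _
          _ ≤ |a0| ^ 2 := pow_le_pow_of_le_one (abs_nonneg _) habs (by omega)
          _ = a0 ^ 2 := sq_abs a0
      have hcb : ∀ j : ℕ, ((m-1).choose j : ℝ) ≤ 2 ^ m := by
        intro j
        calc ((m-1).choose j : ℝ) ≤ ((2:ℕ) ^ (m-1) : ℕ) := by exact_mod_cast choose_le_two_pow' _ _
        _ ≤ ((2:ℕ) ^ m : ℕ) := by exact_mod_cast Nat.pow_le_pow_right (by norm_num) (by omega)
        _ = 2 ^ m := by push_cast; ring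
      have hma : |(m : ℝ) * a0 + k| ≤ (m : ℝ) + k := by
        rw [abs_le]; constructor <;> nlinarith [abs_le.mp habs]
      have hka : |(k : ℝ) * a0 + m| ≤ (m : ℝ) + k := by
        rw [abs_le]; constructor <;> nlinarith [abs_le.mp habs]
      have h2 : |((Nat.choose (m - 1) (i+1) : ℝ) * ((m : ℝ) * a0 + k) * a0
          + (if (i+1) = 0 then 0 else (Nat.choose (m - 1) (i+1-1) : ℝ)) * ((k : ℝ) * a0 + m))| ≤ B := by
        simp only [if_neg (Nat.succ_ne_zero i), Nat.add_sub_cancel]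
        have hcb' : ∀ j : ℕ, |((m-1).choose j : ℝ)| ≤ 2 ^ m := fun j => by
          rw [abs_of_nonneg (by positivity : (0:ℝ) ≤ ((m-1).choose j : ℝ))]; exact hcb j
        have t1 : |((m-1).choose (i+1) : ℝ) * ((m : ℝ) * a0 + k) * a0|
            ≤ 2 ^ m * ((m : ℝ) + k) * 1 := by
          rw [abs_mul, abs_mul]
          exact mul_le_mul (mul_le_mul (hcb' _) hma (abs_nonneg _) (by positivity)) habs
            (abs_nonneg _) (by positivity)
        have t2 : |((m-1).choose i : ℝ) * ((k : ℝ) * a0 + m)| ≤ 2 ^ m * ((m : ℝ) + k) := by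
          rw [abs_mul]
          exact mul_le_mul (hcb' _) hka (abs_nonneg _) (by positivity)
        calc _ ≤ |((m-1).choose (i+1) : ℝ) * ((m : ℝ) * a0 + k) * a0|
              + |((m-1).choose i : ℝ) * ((k : ℝ) * a0 + m)| := abs_add_le _ _
        _ ≤ 2 ^ m * ((m : ℝ) + k) * 1 + 2 ^ m * ((m : ℝ) + k) := add_le_add t1 t2
        _ = B := by rw [hB]; ring
      exact mul_le_mul h1 h2 (abs_nonneg _) (by positivity)
    have hsum : |∑ i ∈ range m, ((-1 : ℝ) ^ (i+1) * a0 ^ (2 * (i+1)) / (2 * ((i+1 : ℕ) : ℝ) - 1)) *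
        ((Nat.choose (m - 1) (i+1) : ℝ) * ((m : ℝ) * a0 + k) * a0
          + (if (i+1) = 0 then 0 else (Nat.choose (m - 1) (i+1-1) : ℝ)) * ((k : ℝ) * a0 + m))|
        ≤ m * (a0 ^ 2 * B) := by
      calc _ ≤ ∑ i ∈ range m, |((-1 : ℝ) ^ (i+1) * a0 ^ (2 * (i+1)) / (2 * ((i+1 : ℕ) : ℝ) - 1)) *
            ((Nat.choose (m - 1) (i+1) : ℝ) * ((m : ℝ) * a0 + k) * a0
              + (if (i+1) = 0 then 0 else (Nat.choose (m - 1) (i+1-1) : ℝ)) * ((k : ℝ) * a0 + m))| :=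
            Finset.abs_sum_le_sum_abs _ _
      _ ≤ ∑ _i ∈ range m, a0 ^ 2 * B := Finset.sum_le_sum hbound
      _ = m * (a0 ^ 2 * B) := by rw [Finset.sum_const, card_range, nsmul_eq_mul]
    have hMa : M * (-a0) ≤ (k : ℝ) / 2 := by
      calc M * (-a0) ≤ M * ((k : ℝ) / (2 * M)) := mul_le_mul_of_nonneg_left ha0leM hMpos.le
      _ = (k : ℝ) / 2 := by
          rw [eq_div_iff (by norm_num : (2:ℝ) ≠ 0)]
          field_simp
    have key : 0 < -(((m : ℝ) * a0 + k) * a0) - m * (a0 ^ 2 * B) := by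
      have expand : -(((m : ℝ) * a0 + k) * a0) - m * (a0 ^ 2 * B) = (-a0) * ((k : ℝ) + M * a0) := by
        rw [hM]; ring
      rw [expand]
      rw [mul_neg] at hMa
      apply mul_pos (by linarith)
      linarith
    linarith [(abs_le.mp hsum).1]
  -- continuity and IVT
  have hcont : Continuous fun a => Spoly m k a a := by
    simp only [Spoly]
    apply continuous_finset_sum
    intro j _
    fun_prop
  obtain ⟨c, hc, hfc⟩ := intermediate_value_Ioo (le_of_lt hLa0)
    (hcont.continuousOn (s := Set.Icc L a0)) (Set.mem_Ioo.mpr ⟨hfL, hfa0⟩)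
  exact ⟨c, hc.1, lt_trans hc.2 ha0neg, hfc⟩
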